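/- There exist β > 0, C > 0 and an integer N₀ such that for every N ≥ N₀ and every admissible choice of (μ_N, v_N), Σ_{s ∈ ℕ, s ≥ s*_N} P(G_s) ≤ C·N^{−β}. -/

import Mathlib

open MeasureTheory ProbabilityTheory Filter Real
open scoped ENNReal NNReal

lemma gauss_pdf_mul (μ t : ℝ) (x : ℝ) :
    gaussianPDFReal μ 1 x * Real.exp (t * x)
      = Real.exp (μ * t + t ^ 2 / 2) * gaussianPDFReal (μ + t) 1 x := by
  simp only [gaussianPDFReal, NNReal.coe_one, mul_one]
  rw [mul_assoc, ← Real.exp_add, mul_comm (Real.exp _), mul_assoc, ← Real.exp_add]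
  congr 2
  ring

lemma gauss_integral_aux (μ : ℝ) (g : ℝ → ℝ) :
    (∫ x, g x ∂(gaussianReal μ 1))
      = ∫ x, gaussianPDFReal μ 1 x * g x := by
  rw [gaussianReal_of_var_ne_zero μ one_ne_zero]
  have h : gaussianPDF μ 1 = fun x => ((gaussianPDFReal μ 1 x).toNNReal : ℝ≥0∞) := by
    funext x; rfl
  rw [h, integral_withDensity_eq_integral_smul ((measurable_gaussianPDFReal μ 1).real_toNNReal) g]
  congr 1; funext x
  rw [NNReal.smul_def, smul_eq_mul, Real.coe_toNNReal _ (gaussianPDFReal_nonneg μ 1 x)]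

lemma gauss_integrable (μ t : ℝ) :
    Integrable (fun x => Real.exp (t * x)) (gaussianReal μ 1) := by
  rw [gaussianReal_of_var_ne_zero μ one_ne_zero]
  have h : gaussianPDF μ 1 = fun x => ((gaussianPDFReal μ 1 x).toNNReal : ℝ≥0∞) := by
    funext x; rfl
  rw [h, integrable_withDensity_iff_integrable_smul
    ((measurable_gaussianPDFReal μ 1).real_toNNReal)]
  have : (fun x => ((gaussianPDFReal μ 1 x).toNNReal : ℝ≥0) • Real.exp (t * x))
      = fun x => Real.exp (μ * t + t ^ 2 / 2) * gaussianPDFReal (μ + t) 1 x := by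
    funext x
    rw [NNReal.smul_def, smul_eq_mul, Real.coe_toNNReal _ (gaussianPDFReal_nonneg μ 1 x),
      gauss_pdf_mul]
  rw [this]
  exact (integrable_gaussianPDFReal (μ + t) 1).const_mul _

lemma gauss_mgf (μ t : ℝ) :
    (∫ x, Real.exp (t * x) ∂(gaussianReal μ 1)) = Real.exp (μ * t + t ^ 2 / 2) := by
  rw [gauss_integral_aux]
  have : (fun x => gaussianPDFReal μ 1 x * Real.exp (t * x))
      = fun x => Real.exp (μ * t + t ^ 2 / 2) * gaussianPDFReal (μ + t) 1 x := by
    funext x; exact gauss_pdf_mul μ t x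
  rw [this, integral_const_mul, integral_gaussianPDFReal_eq_one (μ + t) one_ne_zero, mul_one]

lemma geom_tail (r : ℝ) (hr0 : 0 < r) (hr1 : r < 1) (m : ℕ) :
    (∑' s : ℕ, (if m ≤ s then ENNReal.ofReal r ^ s else 0))
      = ENNReal.ofReal ((1 - r)⁻¹ * r ^ m) := by
  set x : ℝ≥0∞ := ENNReal.ofReal r with hx
  have hx0 : x ≠ 0 := by
    simp only [hx, ne_eq, ENNReal.ofReal_eq_zero, not_le]
    exact hr0
  have hmem : ∀ y : ℕ, (if m ≤ y then x ^ y else 0) ≠ 0 → m ≤ y := by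
    intro y h
    by_contra hc
    simp [hc] at h
  have hshift : (∑' s : ℕ, (if m ≤ s then x ^ s else 0)) = ∑' i : ℕ, x ^ (i + m) := by
    refine (tsum_eq_tsum_of_ne_zero_bij (fun y => (y : ℕ) - m) ?_ ?_ ?_).symm
    · intro a b h
      have ha := hmem a.1 a.2
      have hb := hmem b.1 b.2
      exact Subtype.ext (by simp only at h; omega)
    · intro i _
      refine ⟨⟨i + m, ?_⟩, by simp⟩
      simp only [Function.mem_support, ne_eq, if_pos (Nat.le_add_left m i)]
      exact pow_ne_zero _ hx0
    · intro y
      have hy := hmem y.1 y.2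
      simp only [Nat.sub_add_cancel hy, if_pos hy]
  rw [hshift]
  have : ∀ i : ℕ, x ^ (i + m) = x ^ i * x ^ m := fun i => pow_add x i m
  simp_rw [this]
  rw [ENNReal.tsum_mul_right, ENNReal.tsum_geometric,
    ENNReal.ofReal_mul (inv_nonneg.2 (by linarith)), ENNReal.ofReal_inv_of_pos (by linarith),
    ENNReal.ofReal_sub 1 hr0.le, ENNReal.ofReal_one, ENNReal.ofReal_pow hr0.le, mul_comm]


lemma rtail (c γ δ β ε C a r d Δr Nr : ℝ) (m : ℕ)
    (hc0 : 0 < c) (hγ0 : 0 < γ) (hδ1 : δ < 1)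
    (hβ : β = c * γ ^ 2 / 2) (hε : ε = c * γ ^ 2 / 8) (hC : C = 1 + 2 / (γ ^ 2 * (1 - δ) ^ 2))
    (ha : a = γ ^ 2 * d ^ 2 / 2) (hr : r = Real.exp (-a))
    (hΔr : 0 < Δr) (hμv : (1 - δ) * Δr ≤ d) (hΔN : 1 ≤ Nr ^ ε * Δr)
    (hm : 2 * c * Real.log Nr / d ^ 2 ≤ (m : ℝ))
    (hN1 : 1 ≤ Nr) (hlogN : 0 < Real.log Nr) :
    (1 - r)⁻¹ * r ^ m ≤ C * Nr ^ (-β) := by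
  have hNpos : (0:ℝ) < Nr := lt_of_lt_of_le zero_lt_one hN1
  have hd0 : 0 < d := lt_of_lt_of_le (mul_pos (by linarith) hΔr) hμv
  have ha0 : 0 < a := by rw [ha]; positivity
  have hr0 : 0 < r := by rw [hr]; exact Real.exp_pos _
  have hε0 : 0 < ε := by rw [hε]; positivity
  have hu0 : (0:ℝ) < Nr ^ ε := Real.rpow_pos_of_pos hNpos ε
  set u : ℝ := Nr ^ ε with hudef
  have hΔinv : u⁻¹ ≤ Δr := by
    have h := mul_le_mul_of_nonneg_left hΔN (inv_nonneg.2 hu0.le)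
    rw [mul_one, ← mul_assoc, inv_mul_cancel₀ (ne_of_gt hu0), one_mul] at h
    exact h
  have hdl : (1 - δ) * u⁻¹ ≤ d :=
    le_trans (mul_le_mul_of_nonneg_left hΔinv (by linarith)) hμv
  have hdlpos : (0:ℝ) < (1 - δ) * u⁻¹ := by
    have : (0:ℝ) < 1 - δ := by linarith
    positivity
  have hd2 : ((1 - δ) * u⁻¹) ^ 2 ≤ d ^ 2 := pow_le_pow_left₀ hdlpos.le hdl 2
  have hinva : 1 / a ≤ 2 / (γ ^ 2 * (1 - δ) ^ 2) * u ^ 2 := by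
    have hden : (0:ℝ) < γ ^ 2 * ((1 - δ) * u⁻¹) ^ 2 := by positivity
    have h1 : 1 / a = 2 / (γ ^ 2 * d ^ 2) := by rw [ha, one_div_div]
    have h2 : 2 / (γ ^ 2 * d ^ 2) ≤ 2 / (γ ^ 2 * ((1 - δ) * u⁻¹) ^ 2) := by
      gcongr
    have h3 : 2 / (γ ^ 2 * ((1 - δ) * u⁻¹) ^ 2) = 2 / (γ ^ 2 * (1 - δ) ^ 2) * u ^ 2 := by
      have hδ' : (1:ℝ) - δ ≠ 0 := by linarith
      field_simp
      try ring
    rw [h1, ← h3]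
    exact h2
  have hsa : (2 * c * Real.log Nr / d ^ 2) * a = c * γ ^ 2 * Real.log Nr := by
    rw [ha]
    field_simp
  have hrm : r ^ m ≤ Nr ^ (-(c * γ ^ 2)) := by
    rw [hr, ← Real.exp_nat_mul]
    have hmul := mul_le_mul_of_nonneg_right hm ha0.le
    calc Real.exp ((m : ℝ) * -a) ≤ Real.exp (-(2 * c * Real.log Nr / d ^ 2 * a)) :=
          Real.exp_le_exp.2 (by linarith)
      _ = Nr ^ (-(c * γ ^ 2)) := by
          rw [hsa, Real.rpow_def_of_pos hNpos]
          congr 1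
          ring
  have hinvr : (1 - r)⁻¹ ≤ 1 + 1 / a := by
    have hexpa := Real.add_one_le_exp a
    have hrle : r ≤ (1 + a)⁻¹ := by
      rw [hr, Real.exp_neg]
      exact inv_anti₀ (by positivity) (by linarith)
    have hfrac : a / (1 + a) ≤ 1 - r := by
      have h : 1 - (1 + a)⁻¹ = a / (1 + a) := by field_simp; ring
      linarith
    calc (1 - r)⁻¹ ≤ (a / (1 + a))⁻¹ := inv_anti₀ (by positivity) hfrac
      _ = (1 + a) / a := by rw [inv_div]
      _ = 1 / a + 1 := by rw [add_div, div_self (ne_of_gt ha0), one_div]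
      _ ≤ 1 + 1 / a := by linarith
  have hNpow : (0:ℝ) ≤ Nr ^ (-(c * γ ^ 2)) := (Real.rpow_pos_of_pos hNpos _).le
  have hcγ : (0:ℝ) ≤ c * γ ^ 2 := mul_nonneg hc0.le (sq_nonneg γ)
  have hu2 : u ^ 2 * Nr ^ (-(c * γ ^ 2)) = Nr ^ (2 * ε - c * γ ^ 2) := by
    rw [hudef, ← Real.rpow_natCast (Nr ^ ε) 2, ← Real.rpow_mul hNpos.le,
      ← Real.rpow_add hNpos]
    congr 1
    push_cast
    ring
  have h1 : 2 * ε - c * γ ^ 2 ≤ -β := by rw [hε, hβ]; linarith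
  have h2 : -(c * γ ^ 2) ≤ -β := by rw [hβ]; linarith
  have m1 := Real.rpow_le_rpow_of_exponent_le hN1 h1
  have m2 := Real.rpow_le_rpow_of_exponent_le hN1 h2
  calc (1 - r)⁻¹ * r ^ m ≤ (1 + 1 / a) * Nr ^ (-(c * γ ^ 2)) :=
        mul_le_mul hinvr hrm (pow_nonneg hr0.le m) (by positivity)
    _ ≤ (1 + 2 / (γ ^ 2 * (1 - δ) ^ 2) * u ^ 2) * Nr ^ (-(c * γ ^ 2)) :=
        mul_le_mul_of_nonneg_right (by linarith) hNpow
    _ = Nr ^ (-(c * γ ^ 2))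
          + 2 / (γ ^ 2 * (1 - δ) ^ 2) * (u ^ 2 * Nr ^ (-(c * γ ^ 2))) := by ring
    _ ≤ Nr ^ (-β) + 2 / (γ ^ 2 * (1 - δ) ^ 2) * Nr ^ (-β) := by
        have := mul_le_mul_of_nonneg_left (hu2 ▸ m1)
          (by positivity : (0:ℝ) ≤ 2 / (γ ^ 2 * (1 - δ) ^ 2))
        linarith
    _ = C * Nr ^ (-β) := by rw [hC]; ring


lemma chernoff {Ω : Type} [MeasurableSpace Ω] (P : Measure Ω) [IsProbabilityMeasure P]
    (X : ℕ → Ω → ℝ) (hX : ∀ t, Measurable (X t))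
    (hind : iIndepFun X P)
    (μ : ℝ) (hmap : ∀ t, Measure.map (X t) P = gaussianReal μ 1)
    (s : ℕ) (r : ℝ) (hr : 0 ≤ r) :
    P {ω | (s : ℝ) * (μ + r) ≤ ∑ t ∈ Finset.range s, X t ω}
      ≤ ENNReal.ofReal (Real.exp (-(s : ℝ) * r ^ 2 / 2)) := by
  have hint : ∀ i : ℕ, Integrable (fun ω => Real.exp (r * X i ω)) P := by
    intro i
    have hmeas : AEStronglyMeasurable (fun x : ℝ => Real.exp (r * x))
        (Measure.map (X i) P) := ((measurable_const.mul measurable_id).exp).aestronglyMeasurable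
    have := (integrable_map_measure hmeas (hX i).aemeasurable).mp
      (by rw [hmap i]; exact gauss_integrable μ r)
    exact this
  have hmgf : ∀ i : ℕ, mgf (X i) P r = Real.exp (μ * r + r ^ 2 / 2) := by
    intro i
    have hmeas : AEStronglyMeasurable (fun x : ℝ => Real.exp (r * x))
        (Measure.map (X i) P) := ((measurable_const.mul measurable_id).exp).aestronglyMeasurable
    rw [mgf, ← integral_map (hX i).aemeasurable hmeas, hmap i, gauss_mgf]
  set Y : Ω → ℝ := ∑ i ∈ Finset.range s, X i with hY
  have hYint : Integrable (fun ω => Real.exp (r * Y ω)) P :=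
    hind.integrable_exp_mul_sum hX (fun i _ => hint i)
  have hYmgf : mgf Y P r = Real.exp (μ * r + r ^ 2 / 2) ^ s := by
    rw [hY, hind.mgf_sum hX]
    simp [hmgf]
  have hset : {ω | (s : ℝ) * (μ + r) ≤ ∑ t ∈ Finset.range s, X t ω}
      = {ω | (s : ℝ) * (μ + r) ≤ Y ω} := by
    ext ω; simp [hY, Finset.sum_apply]
  have hch := measure_ge_le_exp_mul_mgf (X := Y) (μ := P) ((s : ℝ) * (μ + r)) hr hYint
  rw [hYmgf] at hch
  have heq : Real.exp (-r * ((s : ℝ) * (μ + r))) * Real.exp (μ * r + r ^ 2 / 2) ^ s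
      = Real.exp (-(s : ℝ) * r ^ 2 / 2) := by
    rw [← Real.exp_nat_mul, ← Real.exp_add]
    congr 1; ring
  rw [hset]
  calc P {ω | (s : ℝ) * (μ + r) ≤ Y ω}
      = ENNReal.ofReal ((P {ω | (s : ℝ) * (μ + r) ≤ Y ω}).toReal) :=
        (ENNReal.ofReal_toReal (measure_ne_top _ _)).symm
    _ ≤ ENNReal.ofReal (Real.exp (-(s : ℝ) * r ^ 2 / 2)) := by
        apply ENNReal.ofReal_le_ofReal
        rw [← heq]; exact hch


set_option maxHeartbeats 4000000 in
theorem stmt_8 (ζ q δ c : ℝ)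
    (hζ : ζ ∈ Set.Ioo (0 : ℝ) 1) (hq : q ∈ Set.Ioo (0 : ℝ) 1) (hδ : δ ∈ Set.Ioo (0 : ℝ) 1)
    (hc : 1 - ζ + ζ * q < c)
    (K : ℕ → ℕ) (hKpos : ∀ N, 0 < K N)
    (hKζ : Tendsto (fun N : ℕ => Real.log (K N) / Real.log N) atTop (nhds ζ))
    (Δ : ℕ → ℝ) (hΔ : ∀ N, Δ N ∈ Set.Ioo (0 : ℝ) 1)
    (hΔ0 : Tendsto Δ atTop (nhds 0))
    (hΔε : ∀ ε : ℝ, 0 < ε → Tendsto (fun N : ℕ => (N : ℝ) ^ ε * Δ N) atTop atTop) :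
    ∃ β : ℝ, 0 < β ∧ ∃ C : ℝ, 0 < C ∧ ∃ N₀ : ℕ, ∀ N : ℕ, N₀ ≤ N →
      ∀ μ v : ℝ, (1 - δ) * Δ N ≤ v - μ →
      ∀ (Ω : Type) (_ : MeasurableSpace Ω) (P : Measure Ω), IsProbabilityMeasure P →
      ∀ X : ℕ → Ω → ℝ, (∀ t, Measurable (X t)) →
        iIndepFun X P →
        (∀ t, Measure.map (X t) P = gaussianReal μ 1) →
        (∑' s : ℕ, if 2 * c * Real.log N / (v - μ) ^ 2 ≤ (s : ℝ) then
            P {ω | ∃ n : ℕ, K N ≤ n ∧ n ≤ N - 1 ∧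
              v ≤ (∑ t ∈ Finset.range s, X t ω) / s
                    + Real.sqrt (2 * Real.log (n / (K N : ℝ) ^ (1 - q)) / s)}
          else 0)
        ≤ ENNReal.ofReal (C * (N : ℝ) ^ (-β)) := by
  obtain ⟨hζ0, hζ1⟩ := hζ
  obtain ⟨hq0, hq1⟩ := hq
  obtain ⟨hδ0, hδ1⟩ := hδ
  have hθc0 : (0 : ℝ) < 1 - ζ + ζ * q := by nlinarith
  have hc0 : (0 : ℝ) < c := lt_trans hθc0 hc
  set θ : ℝ := (1 - ζ + ζ * q) / c with hθdef
  have hθ0 : 0 < θ := div_pos hθc0 hc0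
  have hθ1 : θ < 1 := (div_lt_one hc0).2 hc
  set ρ : ℝ := (θ + 1) / 2 with hρdef
  have hρ0 : 0 < ρ := by positivity
  have hρ1 : ρ < 1 := by simp only [hρdef]; linarith
  have hθρ : θ < ρ := by simp only [hρdef]; linarith
  set γ : ℝ := 1 - Real.sqrt ρ with hγdef
  have hsρ1 : Real.sqrt ρ < 1 := by
    rw [show (1:ℝ) = Real.sqrt 1 by simp]
    exact Real.sqrt_lt_sqrt hρ0.le hρ1
  have hγ0 : 0 < γ := by simp only [hγdef]; linarith
  have hγ1 : γ ≤ 1 := by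
    have := Real.sqrt_nonneg ρ; simp only [hγdef]; linarith
  refine ⟨c * γ ^ 2 / 2, by positivity, 1 + 2 / (γ ^ 2 * (1 - δ) ^ 2), by positivity, ?_⟩
  set β : ℝ := c * γ ^ 2 / 2 with hβdef
  set C : ℝ := 1 + 2 / (γ ^ 2 * (1 - δ) ^ 2) with hCdef
  set ε : ℝ := c * γ ^ 2 / 8 with hεdef
  have hε0 : 0 < ε := by positivity
  -- eventual facts
  have hev2 : ∀ᶠ N : ℕ in atTop, 2 ≤ N := eventually_ge_atTop 2
  have hevb : ∀ᶠ N : ℕ in atTop,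
      Real.log N - (1 - q) * Real.log (K N) ≤ ρ * c * Real.log N := by
    have htend : Tendsto (fun N : ℕ => 1 - (1 - q) * (Real.log (K N) / Real.log N))
        atTop (nhds (1 - (1 - q) * ζ)) :=
      (tendsto_const_nhds.sub ((hKζ.const_mul _)))
    have hlt : 1 - (1 - q) * ζ < ρ * c := by
      have : 1 - (1 - q) * ζ = θ * c := by rw [hθdef, div_mul_cancel₀ _ (ne_of_gt hc0)]; ring
      rw [this]
      exact mul_lt_mul_of_pos_right hθρ hc0
    filter_upwards [htend.eventually (eventually_lt_nhds hlt), hev2] with N hN h2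
    have hlogN : 0 < Real.log N := by
      apply Real.log_pos
      exact_mod_cast lt_of_lt_of_le one_lt_two h2
    have := mul_le_mul_of_nonneg_right hN.le hlogN.le
    calc Real.log N - (1 - q) * Real.log (K N)
        = (1 - (1 - q) * (Real.log (K N) / Real.log N)) * Real.log N := by
          field_simp
      _ ≤ ρ * c * Real.log N := this
  have hevΔ : ∀ᶠ N : ℕ in atTop, 1 ≤ (N : ℝ) ^ ε * Δ N :=
    (hΔε ε hε0).eventually_ge_atTop 1
  obtain ⟨N₀, hN₀⟩ := eventually_atTop.1 (hev2.and (hevb.and hevΔ))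
  refine ⟨N₀, fun N hN μ v hμv Ω mΩ P hP X hXmeas hXind hXmap => ?_⟩
  obtain ⟨h2N, hbN, hΔN⟩ := hN₀ N hN
  have hN1 : (1 : ℝ) ≤ N := by exact_mod_cast le_trans one_le_two h2N
  have hNpos : (0 : ℝ) < N := lt_of_lt_of_le zero_lt_one hN1
  have hlogN : 0 < Real.log N := Real.log_pos (by exact_mod_cast h2N)
  set d : ℝ := v - μ with hddef
  have hΔpos : 0 < Δ N := (hΔ N).1
  have hd0 : 0 < d := lt_of_lt_of_le (mul_pos (by linarith) hΔpos) hμv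
  set a : ℝ := γ ^ 2 * d ^ 2 / 2 with hadef
  have ha0 : 0 < a := by positivity
  set r : ℝ := Real.exp (-a) with hrdef
  have hr0 : 0 < r := Real.exp_pos _
  have hr1 : r < 1 := by
    rw [hrdef]; exact Real.exp_lt_one_iff.2 (by linarith)
  set sstar : ℝ := 2 * c * Real.log N / d ^ 2 with hsstardef
  have hsstar0 : 0 < sstar := by positivity
  set m : ℕ := ⌈sstar⌉₊ with hmdef
  set b : ℝ := Real.log N - (1 - q) * Real.log (K N) with hbdef
  -- termwise bound
  have hterm : ∀ s : ℕ,
      (if sstar ≤ (s : ℝ) then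
        P {ω | ∃ n : ℕ, K N ≤ n ∧ n ≤ N - 1 ∧
          v ≤ (∑ t ∈ Finset.range s, X t ω) / s
                + Real.sqrt (2 * Real.log (n / (K N : ℝ) ^ (1 - q)) / s)}
      else 0) ≤ (if m ≤ s then ENNReal.ofReal r ^ s else 0) := by
    intro s
    by_cases hs : sstar ≤ (s : ℝ)
    · have hms : m ≤ s := Nat.ceil_le.2 hs
      rw [if_pos hs, if_pos hms]
      have hspos : (0 : ℝ) < s := lt_of_lt_of_le hsstar0 hs
      have hsub : {ω | ∃ n : ℕ, K N ≤ n ∧ n ≤ N - 1 ∧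
          v ≤ (∑ t ∈ Finset.range s, X t ω) / s
                + Real.sqrt (2 * Real.log (n / (K N : ℝ) ^ (1 - q)) / s)}
          ⊆ {ω | (s : ℝ) * (μ + γ * d) ≤ ∑ t ∈ Finset.range s, X t ω} := by
        intro ω hω
        obtain ⟨n, hn1, hn2, hv⟩ := hω
        have hKN : (0 : ℝ) < K N := by exact_mod_cast hKpos N
        have hn0 : (0 : ℝ) < n := by
          have : 0 < n := lt_of_lt_of_le (hKpos N) hn1
          exact_mod_cast this
        have hnN : (n : ℝ) ≤ N := by
          have : n ≤ N := le_trans hn2 (Nat.sub_le N 1)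
          exact_mod_cast this
        have hlogeq : Real.log ((n : ℝ) / (K N : ℝ) ^ (1 - q))
            = Real.log n - (1 - q) * Real.log (K N) := by
          rw [Real.log_div (ne_of_gt hn0) (by positivity), Real.log_rpow hKN]
        have hlogle : Real.log ((n : ℝ) / (K N : ℝ) ^ (1 - q)) ≤ b := by
          rw [hlogeq, hbdef]
          have := Real.log_le_log hn0 hnN
          linarith
        have hkey : 2 * Real.log ((n : ℝ) / (K N : ℝ) ^ (1 - q)) / s ≤ ρ * d ^ 2 := by
          rw [div_le_iff₀ hspos]
          have h1 : 2 * c * Real.log N ≤ (s : ℝ) * d ^ 2 := by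
            rw [hsstardef, div_le_iff₀ (by positivity)] at hs
            linarith
          have h2 : ρ * (2 * c * Real.log N) ≤ ρ * ((s : ℝ) * d ^ 2) :=
            mul_le_mul_of_nonneg_left h1 hρ0.le
          calc 2 * Real.log ((n : ℝ) / (K N : ℝ) ^ (1 - q)) ≤ 2 * b := by linarith
            _ ≤ 2 * (ρ * c * Real.log N) := by linarith
            _ = ρ * (2 * c * Real.log N) := by ring
            _ ≤ ρ * ((s : ℝ) * d ^ 2) := h2
            _ = ρ * d ^ 2 * s := by ring
        have hsqrt : Real.sqrt (2 * Real.log ((n : ℝ) / (K N : ℝ) ^ (1 - q)) / s)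
            ≤ Real.sqrt ρ * d := by
          calc Real.sqrt (2 * Real.log ((n : ℝ) / (K N : ℝ) ^ (1 - q)) / s)
              ≤ Real.sqrt (ρ * d ^ 2) := Real.sqrt_le_sqrt hkey
            _ = Real.sqrt ρ * d := by
                rw [Real.sqrt_mul hρ0.le, Real.sqrt_sq hd0.le]
        have hdiv : μ + γ * d ≤ (∑ t ∈ Finset.range s, X t ω) / s := by
          have : v - Real.sqrt ρ * d = μ + γ * d := by
            simp only [hγdef, hddef]; ring
          linarith
        have := (le_div_iff₀ hspos).1 hdiv
        simpa [mul_comm] using this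
      calc P _ ≤ P {ω | (s : ℝ) * (μ + γ * d) ≤ ∑ t ∈ Finset.range s, X t ω} :=
            measure_mono hsub
        _ ≤ ENNReal.ofReal (Real.exp (-(s : ℝ) * (γ * d) ^ 2 / 2)) :=
            chernoff P X hXmeas hXind μ hXmap s (γ * d) (by positivity)
        _ = ENNReal.ofReal r ^ s := by
            rw [← ENNReal.ofReal_pow hr0.le]
            congr 1
            rw [hrdef, ← Real.exp_nat_mul]
            congr 1
            rw [hadef]; ring
    · rw [if_neg hs, if_neg (fun h => hs (Nat.ceil_le.1 h))]

  calc (∑' s : ℕ, if sstar ≤ (s : ℝ) then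
            P {ω | ∃ n : ℕ, K N ≤ n ∧ n ≤ N - 1 ∧
              v ≤ (∑ t ∈ Finset.range s, X t ω) / s
                    + Real.sqrt (2 * Real.log (n / (K N : ℝ) ^ (1 - q)) / s)}
          else 0)
      ≤ ∑' s : ℕ, (if m ≤ s then ENNReal.ofReal r ^ s else 0) :=
        ENNReal.tsum_le_tsum hterm
    _ = ENNReal.ofReal ((1 - r)⁻¹ * r ^ m) := geom_tail r hr0 hr1 m
    _ ≤ ENNReal.ofReal (C * (N : ℝ) ^ (-β)) := by
        apply ENNReal.ofReal_le_ofReal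
        exact rtail c γ δ β ε C a r d (Δ N) N m hc0 hγ0 hδ1 hβdef hεdef hCdef hadef hrdef
          hΔpos hμv hΔN (Nat.le_ceil sstar) hN1 hlogN
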